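/- Let N ≥ 1, h = 1/N, Δt > 0, β ∈ ℝ, γ > 0, let m be a grid function with |m(I)| = 1 for every I, let ṽ be a grid function satisfying (ṽ(I) − m(I))/Δt = −β m(I) × (Δ_h ṽ)(I) − γ m(I) × (m(I) × (Δ_h ṽ)(I)) for every I, and set m⁺(I) = ṽ(I)/|ṽ(I)| (well defined since |ṽ(I)| ≥ 1). Then the original discrete energy dissipates unconditionally: (1/2)‖∇_h m⁺‖_2^2 − (1/2)‖∇_h m‖_2^2 ≤ −γ Δt · h^3 Σ_I | m(I) × (Δ_h ṽ)(I) |^2 ≤ 0. -/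

import Mathlib

open scoped BigOperators RealInnerProductSpace

noncomputable section

/-- Euclidean 3-space. -/
abbrev E3 : Type := EuclideanSpace ℝ (Fin 3)

/-- Cross product on `E3`. -/
def cross3 (a b : E3) : E3 :=
  (WithLp.equiv 2 (Fin 3 → ℝ)).symm
    ![a 1 * b 2 - a 2 * b 1, a 2 * b 0 - a 0 * b 2, a 0 * b 1 - a 1 * b 0]

/-- Index set of the triply periodic grid. -/
abbrev Idx (N : ℕ) := Fin 3 → ZMod N

/-- Grid functions. -/
abbrev GridFun (N : ℕ) := Idx N → E3

/-- Forward difference in direction `r`. -/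
def fd {N : ℕ} (h : ℝ) (r : Fin 3) (f : GridFun N) (I : Idx N) : E3 :=
  (1 / h) • (f (I + Pi.single r 1) - f I)

/-- Centered average in direction `r`. -/
def ca {N : ℕ} (r : Fin 3) (f : GridFun N) (I : Idx N) : E3 :=
  ((1 : ℝ) / 2) • (f (I + Pi.single r 1) + f I)

/-- Discrete Laplacian. -/
def dlap {N : ℕ} (h : ℝ) (f : GridFun N) (I : Idx N) : E3 :=
  ∑ r : Fin 3, (1 / h ^ 2) • (f (I + Pi.single r 1) - (2 : ℝ) • f I + f (I - Pi.single r 1))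

/-- Squared discrete `L²` norm. -/
def l2sq {N : ℕ} [NeZero N] (h : ℝ) (f : GridFun N) : ℝ :=
  h ^ 3 * ∑ I : Idx N, ‖f I‖ ^ 2

/-- Squared discrete gradient (`H¹` seminorm). -/
def gradsq {N : ℕ} [NeZero N] (h : ℝ) (f : GridFun N) : ℝ :=
  h ^ 3 * ∑ I : Idx N, ∑ r : Fin 3, ‖fd h r f I‖ ^ 2

/-- Discrete `ℓᵖ` norm, for real `p`. -/
def pnorm {N : ℕ} [NeZero N] (h p : ℝ) (f : GridFun N) : ℝ :=
  (h ^ 3 * ∑ I : Idx N, ‖f I‖ ^ p) ^ (1 / p)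

/-- Discrete `ℓ^∞` norm. -/
def inorm {N : ℕ} [NeZero N] (f : GridFun N) : ℝ :=
  ⨆ I : Idx N, ‖f I‖

/-- Discrete `ℓ^∞` norm of the gradient. -/
def ginorm {N : ℕ} [NeZero N] (h : ℝ) (f : GridFun N) : ℝ :=
  ⨆ I : Idx N, ⨆ r : Fin 3, ‖fd h r f I‖

/-! The scheme makes `ṽ - m` orthogonal to `m`, so `⟪m, ṽ⟫ = 1` and `|ṽ| ≥ 1`; the precession
term drops out of `⟪ṽ - m, Δ_h ṽ⟫`, which equals `Δt γ |m × Δ_h ṽ|²`. Testing the discrete gradient energy with `ṽ - m`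
(convexity, then summation by parts on the periodic grid) bounds the energy change from `m` to `ṽ`
by `-Δt γ h³ Σ |m × Δ_h ṽ|²`. Finally, normalization `x ↦ x / |x|` is 1-Lipschitz outside the open
unit ball, so projecting `ṽ` back onto the sphere does not increase the gradient energy. -/

open Matrix

section InnerProductSpace

variable {F : Type*} [NormedAddCommGroup F] [InnerProductSpace ℝ F]

lemma half_sq_norm_sub_half_sq_norm_le_inner (x y : F) :
    (1 / 2) * ‖y‖ ^ 2 - (1 / 2) * ‖x‖ ^ 2 ≤ ⟪y - x, y⟫ := by
  rw [inner_sub_left, real_inner_self_eq_norm_sq, real_inner_comm]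
  linarith [norm_sub_sq_real y x, sq_nonneg ‖y - x‖]

lemma norm_inv_norm_smul_sub_inv_norm_smul_le {a b : F} (ha : 1 ≤ ‖a‖) (hb : 1 ≤ ‖b‖) :
    ‖‖a‖⁻¹ • a - ‖b‖⁻¹ • b‖ ≤ ‖a - b‖ := by
  have hab : 1 ≤ ‖a‖ * ‖b‖ := one_le_mul_of_one_le_of_one_le ha hb
  have hP : 0 < ‖a‖ * ‖b‖ := one_pos.trans_le hab
  have hc : ⟪a, b⟫ / (‖a‖ * ‖b‖) ≤ 1 := (div_le_one hP).mpr (real_inner_le_norm a b)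
  have hunit : ‖‖a‖⁻¹ • a - ‖b‖⁻¹ • b‖ ^ 2 = 2 - 2 * (⟪a, b⟫ / (‖a‖ * ‖b‖)) := by
    rw [norm_sub_sq_real, norm_smul, norm_smul, real_inner_smul_left, real_inner_smul_right]
    simp only [norm_inv, norm_norm]
    field_simp
    ring
  have hdiff : ‖a - b‖ ^ 2 = ‖a‖ ^ 2 - 2 * (⟪a, b⟫ / (‖a‖ * ‖b‖)) * (‖a‖ * ‖b‖) + ‖b‖ ^ 2 := by
    rw [norm_sub_sq_real, mul_assoc, div_mul_cancel₀ _ hP.ne']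
  refine (sq_le_sq₀ (norm_nonneg _) (norm_nonneg _)).mp ?_
  rw [hunit, hdiff]
  -- the gap is `(‖a‖ - ‖b‖)² + 2 (1 - c) (‖a‖‖b‖ - 1)`, where `c = ⟪a, b⟫ / (‖a‖‖b‖) ≤ 1`
  nlinarith [sq_nonneg (‖a‖ - ‖b‖), mul_nonneg (sub_nonneg.mpr hc) (sub_nonneg.mpr hab)]

variable {G : Type*} [AddCommGroup G] [Fintype G]

lemma sum_inner_fwd_diff_eq_neg_sum_inner_snd_diff (f g : G → F) (e : G) :
    ∑ x, ⟪f (x + e) - f x, g (x + e) - g x⟫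
      = -∑ x, ⟪f x, g (x + e) - (2 : ℝ) • g x + g (x - e)⟫ := by
  have hshift : ∑ x, ⟪f (x + e), g (x + e)⟫ = ∑ x, ⟪f x, g x⟫ :=
    Equiv.sum_comp (Equiv.addRight e) fun x => ⟪f x, g x⟫
  have hshift' : ∑ x, ⟪f (x + e), g x⟫ = ∑ x, ⟪f x, g (x - e)⟫ := by
    simpa using Equiv.sum_comp (Equiv.addRight e) fun x => ⟪f x, g (x - e)⟫
  simp only [inner_sub_left, inner_sub_right, inner_add_right, real_inner_smul_right,
    Finset.sum_sub_distrib, Finset.sum_add_distrib, ← Finset.mul_sum]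
  linarith

end InnerProductSpace

section CrossProduct

lemma cross3_eq_crossProduct (a b : E3) : cross3 a b = WithLp.toLp 2 (a.ofLp ⨯₃ b.ofLp) := by
  ext i
  fin_cases i <;> simp [cross3, cross_apply]

lemma inner_cross3_self_left (a b : E3) : ⟪cross3 a b, a⟫ = 0 := by
  simp [cross3_eq_crossProduct, EuclideanSpace.inner_eq_star_dotProduct]

lemma inner_cross3_self_right (a b : E3) : ⟪cross3 a b, b⟫ = 0 := by
  simp [cross3_eq_crossProduct, EuclideanSpace.inner_eq_star_dotProduct]

lemma inner_cross3_cross3_self (a b : E3) :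
    ⟪cross3 a (cross3 a b), b⟫ = -‖cross3 a b‖ ^ 2 := by
  rw [← real_inner_self_eq_norm_sq]
  simp only [cross3_eq_crossProduct, EuclideanSpace.inner_eq_star_dotProduct, star_trivial]
  rw [triple_product_permutation, triple_product_permutation, ← cross_anticomm a.ofLp b.ofLp,
    dotProduct_neg]

end CrossProduct

section Scheme

variable {Δt β γ : ℝ} {m v w : E3}

lemma sub_eq_smul_of_scheme (hΔt : Δt ≠ 0)
    (hs : (1 / Δt) • (v - m) = -(β • cross3 m w) - γ • cross3 m (cross3 m w)) :
    v - m = Δt • (-(β • cross3 m w) - γ • cross3 m (cross3 m w)) :=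
  (inv_smul_eq_iff₀ hΔt).mp (by rwa [← one_div])

lemma inner_sub_self_of_scheme (hΔt : Δt ≠ 0)
    (hs : (1 / Δt) • (v - m) = -(β • cross3 m w) - γ • cross3 m (cross3 m w)) :
    ⟪v - m, m⟫ = 0 := by
  rw [sub_eq_smul_of_scheme hΔt hs, real_inner_smul_left, inner_sub_left, inner_neg_left,
    real_inner_smul_left, real_inner_smul_left, inner_cross3_self_left, inner_cross3_self_left]
  ring

lemma one_le_norm_of_scheme (hΔt : Δt ≠ 0) (hm : ‖m‖ = 1)
    (hs : (1 / Δt) • (v - m) = -(β • cross3 m w) - γ • cross3 m (cross3 m w)) :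
    1 ≤ ‖v‖ := by
  have hmv : ⟪m, v⟫ = 1 := by
    have h0 := inner_sub_self_of_scheme hΔt hs
    rw [inner_sub_left, real_inner_self_eq_norm_sq, hm, real_inner_comm] at h0
    linarith
  simpa [hmv, hm] using real_inner_le_norm m v

lemma inner_sub_of_scheme (hΔt : Δt ≠ 0)
    (hs : (1 / Δt) • (v - m) = -(β • cross3 m w) - γ • cross3 m (cross3 m w)) :
    ⟪v - m, w⟫ = Δt * γ * ‖cross3 m w‖ ^ 2 := by
  rw [sub_eq_smul_of_scheme hΔt hs, real_inner_smul_left, inner_sub_left, inner_neg_left,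
    real_inner_smul_left, real_inner_smul_left, inner_cross3_self_right, inner_cross3_cross3_self]
  ring

end Scheme

section Grid

variable {N : ℕ} (h : ℝ)

lemma fd_sub (r : Fin 3) (f g : GridFun N) (I : Idx N) :
    fd h r (f - g) I = fd h r f I - fd h r g I := by
  simp only [fd, Pi.sub_apply, ← smul_sub, sub_sub_sub_comm]

lemma sum_sum_inner_fd_eq_neg_sum_inner_dlap [NeZero N] (f g : GridFun N) :
    ∑ I, ∑ r, ⟪fd h r f I, fd h r g I⟫ = -∑ I, ⟪f I, dlap h g I⟫ := by
  simp only [fd, dlap, inner_sum, real_inner_smul_left, real_inner_smul_right, ← Finset.mul_sum]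
  rw [Finset.sum_comm, Finset.sum_congr rfl fun r _ =>
    sum_inner_fwd_diff_eq_neg_sum_inner_snd_diff f g (Pi.single r 1), Finset.sum_neg_distrib,
    Finset.sum_comm]
  ring

variable [NeZero N] {h}

lemma gradsq_normalize_le (hh : 0 ≤ h) {v : GridFun N} (hv : ∀ I, 1 ≤ ‖v I‖) :
    gradsq h (fun I => ‖v I‖⁻¹ • v I) ≤ gradsq h v := by
  unfold gradsq
  gcongr with I _ r _
  simp only [fd, norm_smul]
  gcongr
  exact norm_inv_norm_smul_sub_inv_norm_smul_le (hv _) (hv _)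

lemma half_gradsq_sub_half_gradsq_le (hh : 0 ≤ h) (m v : GridFun N) :
    (1 / 2) * gradsq h v - (1 / 2) * gradsq h m ≤ -(h ^ 3 * ∑ I, ⟪v I - m I, dlap h v I⟫) := by
  have hconv : ∑ I, ∑ r, ((1 / 2) * ‖fd h r v I‖ ^ 2 - (1 / 2) * ‖fd h r m I‖ ^ 2)
      ≤ ∑ I, ∑ r, ⟪fd h r (v - m) I, fd h r v I⟫ := by
    gcongr with I _ r _
    rw [fd_sub]
    exact half_sq_norm_sub_half_sq_norm_le_inner _ _
  rw [sum_sum_inner_fd_eq_neg_sum_inner_dlap] at hconv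
  simp only [gradsq, Finset.sum_sub_distrib, ← Finset.mul_sum, Pi.sub_apply] at hconv ⊢
  nlinarith [pow_nonneg hh 3]

end Grid

theorem statement10_general (N : ℕ) [NeZero N] (h Δt β γ : ℝ) (hh : h = 1 / (N : ℝ))
    (hΔt : 0 < Δt) (hγ : 0 < γ) (m v : GridFun N) (hm : ∀ I, ‖m I‖ = 1)
    (hscheme : ∀ I : Idx N,
      (1 / Δt) • (v I - m I)
        = -(β • cross3 (m I) (dlap h v I))
            - γ • cross3 (m I) (cross3 (m I) (dlap h v I))) :
    (1 / 2) * gradsq h (fun I => ‖v I‖⁻¹ • v I) - (1 / 2) * gradsq h m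
        ≤ -(γ * Δt * (h ^ 3 * ∑ I : Idx N, ‖cross3 (m I) (dlap h v I)‖ ^ 2)) ∧
      -(γ * Δt * (h ^ 3 * ∑ I : Idx N, ‖cross3 (m I) (dlap h v I)‖ ^ 2)) ≤ 0 := by
  have h0 : 0 ≤ h := hh ▸ by positivity
  have hnorm : ∀ I, 1 ≤ ‖v I‖ := fun I => one_le_norm_of_scheme hΔt.ne' (hm I) (hscheme I)
  have hdiss : ∑ I, ⟪v I - m I, dlap h v I⟫
      = γ * Δt * ∑ I, ‖cross3 (m I) (dlap h v I)‖ ^ 2 := by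
    rw [Finset.mul_sum]
    exact Finset.sum_congr rfl fun I _ => (inner_sub_of_scheme hΔt.ne' (hscheme I)).trans (by ring)
  have hrate : 0 ≤ γ * Δt * (h ^ 3 * ∑ I : Idx N, ‖cross3 (m I) (dlap h v I)‖ ^ 2) :=
    mul_nonneg (mul_nonneg hγ.le hΔt.le)
      (mul_nonneg (pow_nonneg h0 3) (Finset.sum_nonneg fun I _ => sq_nonneg _))
  refine ⟨?_, neg_nonpos.mpr hrate⟩
  have henergy := half_gradsq_sub_half_gradsq_le h0 m v
  rw [hdiss] at henergy
  linarith [gradsq_normalize_le h0 hnorm]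

/-- unconditional dissipation of the original discrete energy in one step. -/
theorem statement10 (N : ℕ) [NeZero N] (hN : 1 ≤ N) (h Δt β γ : ℝ) (hh : h = 1 / (N : ℝ))
    (hΔt : 0 < Δt) (hγ : 0 < γ) (m v : GridFun N) (hm : ∀ I, ‖m I‖ = 1)
    (hscheme : ∀ I : Idx N,
      (1 / Δt) • (v I - m I)
        = -(β • cross3 (m I) (dlap h v I))
            - γ • cross3 (m I) (cross3 (m I) (dlap h v I))) :
    (1 / 2) * gradsq h (fun I => ‖v I‖⁻¹ • v I) - (1 / 2) * gradsq h m
        ≤ -(γ * Δt * (h ^ 3 * ∑ I : Idx N, ‖cross3 (m I) (dlap h v I)‖ ^ 2)) ∧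
      -(γ * Δt * (h ^ 3 * ∑ I : Idx N, ‖cross3 (m I) (dlap h v I)‖ ^ 2)) ≤ 0 :=
  statement10_general N h Δt β γ hh hΔt hγ m v hm hscheme
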